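/- arXiv:0806.3691 — 2 statements merged into one kernel-verified Lean document; each statement's English description precedes it below -/
import Mathlib

section
/- In the braid group B∞, the square roots of free generators satisfy the extended braid relations (EB): for all 1 ≤ k < l, γ_l γ_{l−1} (γ_{l−2} γ_{l−3} ⋯ γ_{k+1} γ_k) γ_l = γ_{l−1} (γ_{l−2} γ_{l−3} ⋯ γ_{k+1} γ_k) γ_l γ_{l−1}, where for k = l−1 the inner product γ_{l−2} ⋯ γ_k is empty. -/
/-- The Artin braid relations on the free group with generators `σ_i`, `i ∈ ℕ+`. -/
def braidRels : Set (FreeGroup ℕ+) :=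
  {r | ∃ i j : ℕ+,
    ((j : ℕ) = (i : ℕ) + 1 ∧
      r = FreeGroup.of i * FreeGroup.of j * FreeGroup.of i *
          (FreeGroup.of j * FreeGroup.of i * FreeGroup.of j)⁻¹) ∨
    ((i : ℕ) + 1 < (j : ℕ) ∧
      r = FreeGroup.of i * FreeGroup.of j * (FreeGroup.of j * FreeGroup.of i)⁻¹)}

/-- The braid group `B∞` on infinitely many strands, presented by the Artin generators
`σ_1, σ_2, …` subject to the braid relations. -/
abbrev BraidInf : Type := PresentedGroup braidRels

/-- The Artin generator `σ_n` of `B∞` for `n ≥ 1`, with the paper's convention `σ_0 = 1`. -/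
def sig (n : ℕ) : BraidInf :=
  if h : 0 < n then PresentedGroup.of (⟨n, h⟩ : ℕ+) else 1

/-- Ascending product `f a * f (a+1) * ⋯ * f b` (equal to `1` when `b < a`). -/
def ascProd {G : Type*} [Monoid G] (f : ℕ → G) (a b : ℕ) : G :=
  ((List.range' a (b + 1 - a)).map f).prod

/-- Descending product `f b * f (b-1) * ⋯ * f a` (equal to `1` when `b < a`). -/
def descProd {G : Type*} [Monoid G] (f : ℕ → G) (b a : ℕ) : G :=
  (((List.range' a (b + 1 - a)).map f).reverse).prod

/-- The square roots of free generators
`γ_k = (σ_1 ⋯ σ_{k−1}) σ_k (σ_{k−1}^{−1} ⋯ σ_1^{−1})` of `B∞`. -/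
def γ (k : ℕ) : BraidInf :=
  ascProd sig 1 (k - 1) * sig k * descProd (fun i => (sig i)⁻¹) (k - 1) 1

/-- The subgroup `B_n` of `B∞` generated by `σ_1, …, σ_{n−1}`. -/
def Bsub (n : ℕ) : Subgroup BraidInf :=
  Subgroup.closure {x | ∃ i : ℕ, 1 ≤ i ∧ i < n ∧ x = sig i}

/-- The subgroup `B_{m,∞}` of `B∞` generated by `{σ_k : k ≥ m}`. -/
def BFrom (m : ℕ) : Subgroup BraidInf :=
  Subgroup.closure {x | ∃ i : ℕ, m ≤ i ∧ x = sig i}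

theorem braid_rel1 {i j : ℕ+} (h : (j : ℕ) = (i : ℕ) + 1) :
    (PresentedGroup.of i : BraidInf) * .of j * .of i = .of j * .of i * .of j := by
  have h1 : (FreeGroup.of i * FreeGroup.of j * FreeGroup.of i *
      (FreeGroup.of j * FreeGroup.of i * FreeGroup.of j)⁻¹) ∈ braidRels :=
    ⟨i, j, Or.inl ⟨h, rfl⟩⟩
  have h2 : (PresentedGroup.mk braidRels) (FreeGroup.of i * FreeGroup.of j * FreeGroup.of i *
      (FreeGroup.of j * FreeGroup.of i * FreeGroup.of j)⁻¹) = 1 :=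
    (QuotientGroup.eq_one_iff _).mpr (Subgroup.subset_normalClosure h1)
  simp only [map_mul, map_inv] at h2
  exact mul_inv_eq_one.mp h2

theorem braid_rel2 {i j : ℕ+} (h : (i : ℕ) + 1 < (j : ℕ)) :
    (PresentedGroup.of i : BraidInf) * .of j = .of j * .of i := by
  have h1 : (FreeGroup.of i * FreeGroup.of j * (FreeGroup.of j * FreeGroup.of i)⁻¹) ∈ braidRels :=
    ⟨i, j, Or.inr ⟨h, rfl⟩⟩
  have h2 : (PresentedGroup.mk braidRels) (FreeGroup.of i * FreeGroup.of j *
      (FreeGroup.of j * FreeGroup.of i)⁻¹) = 1 :=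
    (QuotientGroup.eq_one_iff _).mpr (Subgroup.subset_normalClosure h1)
  simp only [map_mul, map_inv] at h2
  exact mul_inv_eq_one.mp h2

theorem shMap_rels : ∀ r ∈ braidRels,
    FreeGroup.lift (fun i : ℕ+ => (PresentedGroup.of (i + 1) : BraidInf)) r = 1 := by
  rintro r ⟨i, j, ⟨h, rfl⟩ | ⟨h, rfl⟩⟩
  · simp only [map_mul, map_inv, FreeGroup.lift_apply_of]
    rw [mul_inv_eq_one]
    exact braid_rel1 (by push_cast; omega)
  · simp only [map_mul, map_inv, FreeGroup.lift_apply_of]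
    rw [mul_inv_eq_one]
    exact braid_rel2 (by push_cast; omega)

/-- The shift endomorphism `sh` of `B∞`, determined by `sh(σ_i) = σ_{i+1}`. -/
def sh : BraidInf →* BraidInf := PresentedGroup.toGroup shMap_rels

/-- The `m`-shift `sh_m(τ) = σ_m σ_{m−1} ⋯ σ_1 ⬝ sh(τ) ⬝ σ_1^{−1} ⋯ σ_{m−1}^{−1} σ_m^{−1}`. -/
def shm (m : ℕ) (τ : BraidInf) : BraidInf :=
  descProd sig m 1 * sh τ * ascProd (fun i => (sig i)⁻¹) 1 m

/-!
With `Δ_n = σ_1 σ_2 ⋯ σ_n`, the definition of `γ_i` reads `γ_i = Δ_i Δ_{i-1}⁻¹`, so the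
descending product `γ_m ⋯ γ_k` telescopes to `Δ_m Δ_{k-1}⁻¹`. Writing `P = Δ_{l-2}`,
`Q = Δ_{k-1}`, `s = σ_{l-1}`, `t = σ_l`, both sides of (EB) become words in `P, Q, s, t`, and
they agree because `t` commutes with `P` and `Q` and `s t s = t s t`.
-/

section Products

variable {G : Type*} [Group G]

lemma ascProd_succ (f : ℕ → G) {a b : ℕ} (h : a ≤ b + 1) :
    ascProd f a (b + 1) = ascProd f a b * f (b + 1) := by
  unfold ascProd
  rw [show b + 1 + 1 - a = (b + 1 - a) + 1 by omega, List.range'_concat,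
    show a + 1 * (b + 1 - a) = b + 1 by omega]
  simp

lemma descProd_of_lt (f : ℕ → G) {a b : ℕ} (h : b < a) : descProd f b a = 1 := by
  simp [descProd, Nat.sub_eq_zero_of_le h]

lemma descProd_succ (f : ℕ → G) {a b : ℕ} (h : a ≤ b + 1) :
    descProd f (b + 1) a = f (b + 1) * descProd f b a := by
  unfold descProd
  rw [show b + 1 + 1 - a = (b + 1 - a) + 1 by omega, List.range'_concat,
    show a + 1 * (b + 1 - a) = b + 1 by omega]
  simp

lemma descProd_inv (f : ℕ → G) (a b : ℕ) :
    descProd (fun i => (f i)⁻¹) b a = (ascProd f a b)⁻¹ := by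
  rw [descProd, ascProd, List.prod_inv_reverse, List.map_map]
  rfl

lemma descProd_mul_inv_telescope (F : ℕ → G) {k m : ℕ} (h : k ≤ m + 1) :
    descProd (fun i => F i * (F (i - 1))⁻¹) m k = F m * (F (k - 1))⁻¹ := by
  induction m with
  | zero =>
    rcases Nat.le_one_iff_eq_zero_or_eq_one.mp h with rfl | rfl
    · simp [descProd]
    · simp [descProd_of_lt]
  | succ m ih =>
    rcases Nat.lt_or_ge m (k - 1) with hm | hm
    · rw [descProd_of_lt _ (by omega), show k - 1 = m + 1 by omega, mul_inv_cancel]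
    · rw [descProd_succ _ (by omega), ih (by omega), Nat.add_sub_cancel]
      group

end Products

lemma extended_braid_of_commute {G : Type*} [Group G] {P Q s t : G}
    (hst : s * t * s = t * s * t) (hP : Commute t P) (hQ : Commute t Q) :
    P * s * t * (P * s)⁻¹ * (P * s * P⁻¹) * (P * Q⁻¹) * (P * s * t * (P * s)⁻¹)
      = P * s * P⁻¹ * (P * Q⁻¹) * (P * s * t * (P * s)⁻¹) * (P * s * P⁻¹) := by
  calc _ = P * s * (t * (Q⁻¹ * P)) * s * t * s⁻¹ * P⁻¹ := by group
    _ = P * s * (Q⁻¹ * P * t) * s * t * s⁻¹ * P⁻¹ := by rw [(hQ.inv_right.mul_right hP).eq]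
    _ = P * s * Q⁻¹ * P * (t * s * t) * s⁻¹ * P⁻¹ := by group
    _ = P * s * Q⁻¹ * P * (s * t * s) * s⁻¹ * P⁻¹ := by rw [hst]
    _ = _ := by group

lemma sig_zero : sig 0 = 1 := rfl

lemma sig_braid {i : ℕ} (hi : 1 ≤ i) :
    sig i * sig (i + 1) * sig i = sig (i + 1) * sig i * sig (i + 1) := by
  rw [sig, sig, dif_pos (by omega), dif_pos (by omega)]
  exact braid_rel1 rfl

lemma commute_sig_sig {i j : ℕ} (h : i + 2 ≤ j) : Commute (sig i) (sig j) := by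
  rcases Nat.eq_zero_or_pos i with rfl | hi
  · exact sig_zero ▸ Commute.one_left _
  · rw [sig, sig, dif_pos hi, dif_pos (by omega)]
    exact braid_rel2 (show i + 1 < j by omega)

lemma commute_sig_ascProd {j a n : ℕ} (h : n + 2 ≤ j) : Commute (sig j) (ascProd sig a n) := by
  refine Commute.list_prod_right _ _ fun y hy => ?_
  obtain ⟨i, hi, rfl⟩ := List.mem_map.mp hy
  rw [List.mem_range'_1] at hi
  exact (commute_sig_sig (by omega)).symm

lemma ascProd_sig_pred_mul (i : ℕ) : ascProd sig 1 (i - 1) * sig i = ascProd sig 1 i := by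
  cases i with
  | zero => rw [sig_zero, mul_one]
  | succ i => exact (ascProd_succ sig (by omega)).symm

lemma gamma_eq_mul_inv (i : ℕ) : γ i = ascProd sig 1 i * (ascProd sig 1 (i - 1))⁻¹ := by
  rw [γ, descProd_inv, ascProd_sig_pred_mul]

lemma descProd_gamma {k m : ℕ} (h : k ≤ m + 1) :
    descProd γ m k = ascProd sig 1 m * (ascProd sig 1 (k - 1))⁻¹ := by
  rw [show γ = _ from funext gamma_eq_mul_inv]
  exact descProd_mul_inv_telescope _ h

/-- In `B∞` the square roots of free generators satisfy the extended braid relations (EB):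
for all `1 ≤ k < l`,
`γ_l γ_{l−1} (γ_{l−2} γ_{l−3} ⋯ γ_{k+1} γ_k) γ_l = γ_{l−1} (γ_{l−2} ⋯ γ_k) γ_l γ_{l−1}`
(the inner product being empty for `k = l−1`). -/
theorem gamma_extended_braid_relations (k l : ℕ) (hk : 1 ≤ k) (hkl : k < l) :
    γ l * γ (l - 1) * descProd γ (l - 2) k * γ l
      = γ (l - 1) * descProd γ (l - 2) k * γ l * γ (l - 1) := by
  obtain ⟨n, rfl⟩ : ∃ n, l = n + 2 := ⟨l - 2, by omega⟩
  have hΔ₁ : ascProd sig 1 (n + 1) = ascProd sig 1 n * sig (n + 1) := ascProd_succ sig (by omega)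
  have hΔ₂ : ascProd sig 1 (n + 2) = ascProd sig 1 n * sig (n + 1) * sig (n + 2) := by
    rw [ascProd_succ sig (by omega), hΔ₁]
  simp only [Nat.add_sub_cancel, Nat.add_succ_sub_one, descProd_gamma (show k ≤ n + 1 by omega),
    gamma_eq_mul_inv, hΔ₁, hΔ₂]
  exact extended_braid_of_commute (sig_braid (by omega)) (commute_sig_ascProd (by omega))
    (commute_sig_ascProd (by omega))
end

section
/- Let p ≥ 2 be an integer and set ω = exp(2πi/p) if p is odd and ω = exp(πi/p) if p is even. Let A be a unital complex *-algebra containing unitaries (e_i)_{i ≥ 0} (i.e., e_i* e_i = e_i e_i* = 1) satisfying e_i^p = 1 for all i and e_i e_j = ω² e_j e_i whenever i < j. Define v_i = ω e_{i−1}* e_i for i ≥ 1 and u_i = p^{−1/2} Σ_{k=0}^{p−1} ω^{k²} v_i^k. Then: (a) v_i^p = 1, v_i v_{i+1} = ω² v_{i+1} v_i, and v_i v_j = v_j v_i when |i−j| > 1; (b) each u_i is unitary; (c) the u_i satisfy the braid relations u_i u_{i+1} u_i = u_{i+1} u_i u_{i+1} and u_i u_j = u_j u_i for |i−j| > 1;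 and (d) u_{i+1} e_i u_{i+1}* = e_{i+1} for all i ≥ 0. -/
/-!
Write `c(x) = ω^{x²}` for `x : ZMod p` (well defined since `ω^{2p} = ω^{p²} = 1`) and
`S(v) = ∑ₓ c(x) vˣ`, so that `u_i = S(v_i) / √p`. Because `c(x + y) = ω^{2xy} c(x) c(y)` and `ω²`
is a primitive `p`-th root of unity, orthogonality of the characters `x ↦ ω^{2xm}` gives
`S(v)⋆ S(v) = p` for every unitary `v` with `vᵖ = 1`. The case `c(x + 1) = ω ω^{2x} c(x)` shows
that conjugation by `u(v)` sends `f` to `ω v f` whenever `f v = ω² v f`; this is (d), and together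
with `u(v⋆) = u(v)` it yields the braid relation. The relations (a) only track the scalars
produced by moving the `e_i` past each other.
-/

open scoped BigOperators

/-- `ω = exp(2πi/p)` if `p` is odd and `ω = exp(πi/p)` if `p` is even. -/
noncomputable def omegaP (p : ℕ) : ℂ :=
  if Odd p then Complex.exp (2 * Real.pi * Complex.I / p)
  else Complex.exp (Real.pi * Complex.I / p)

/-- `v_i = ω e_{i−1}* e_i` (for `i ≥ 1`). -/
noncomputable def vGen {A : Type*} [Ring A] [Algebra ℂ A] [StarRing A]
    (p : ℕ) (e : ℕ → A) (i : ℕ) : A :=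
  omegaP p • (star (e (i - 1)) * e i)

/-- `u_i = p^{−1/2} ∑_{k=0}^{p−1} ω^{k²} v_i^k`. -/
noncomputable def uGen {A : Type*} [Ring A] [Algebra ℂ A] [StarRing A]
    (p : ℕ) (e : ℕ → A) (i : ℕ) : A :=
  ((Real.sqrt p : ℂ))⁻¹ • ∑ k ∈ Finset.range p, (omegaP p) ^ (k ^ 2) • (vGen p e i) ^ k

section

variable {R A : Type*} [CommSemiring R] [Semiring A] [Algebra R A]

def QCommute (q : R) (a b : A) : Prop := a * b = q • (b * a)

namespace QCommute

variable {q r : R} {a b c : A}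

theorem eq (h : QCommute q a b) : a * b = q • (b * a) := h

theorem _root_.Commute.qCommute (h : Commute a b) : QCommute (1 : R) a b := by
  rw [QCommute, one_smul]
  exact h

theorem mul_left (h₁ : QCommute q a c) (h₂ : QCommute r b c) : QCommute (q * r) (a * b) c := by
  rw [QCommute, mul_assoc, h₂, mul_smul_comm, ← mul_assoc, h₁, smul_mul_assoc, smul_smul,
    mul_comm q, mul_assoc]

theorem mul_right (h₁ : QCommute q a b) (h₂ : QCommute r a c) : QCommute (q * r) a (b * c) := by
  rw [QCommute, ← mul_assoc, h₁, smul_mul_assoc, mul_assoc, h₂, mul_smul_comm, smul_smul,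
    ← mul_assoc]

theorem smul_left (h : QCommute q a b) (s : R) : QCommute q (s • a) b := by
  rw [QCommute, smul_mul_assoc, h, mul_smul_comm, smul_comm]

theorem smul_right (h : QCommute q a b) (s : R) : QCommute q a (s • b) := by
  rw [QCommute, mul_smul_comm, h, smul_mul_assoc, smul_comm]

theorem symm (h : QCommute q a b) (hrq : r * q = 1) : QCommute r b a := by
  rw [QCommute, h, smul_smul, hrq, one_smul]

theorem pow_right (h : QCommute q a b) (n : ℕ) : QCommute (q ^ n) a (b ^ n) := by
  induction n with
  | zero => simp [QCommute]
  | succ n ih => simpa only [pow_succ] using ih.mul_right h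

theorem pow_left (h : QCommute q a b) (n : ℕ) : QCommute (q ^ n) (a ^ n) b := by
  induction n with
  | zero => simp [QCommute]
  | succ n ih => simpa only [pow_succ] using ih.mul_left h

theorem commute (h : QCommute (1 : R) a b) : Commute a b := by
  rw [QCommute, one_smul] at h
  exact h

theorem congr_scalar (h : QCommute q a b) (hqr : q = r) : QCommute r a b := hqr ▸ h

theorem smul_mul_pow {ω : R} (h : QCommute (ω ^ 2) b a) (n : ℕ) :
    (ω • (a * b)) ^ n = ω ^ (n ^ 2) • (a ^ n * b ^ n) := by
  induction n with
  | zero => simp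
  | succ n ih =>
    have hbn : b ^ n * a = (ω ^ 2) ^ n • (a * b ^ n) := h.pow_left n
    rw [pow_succ, ih, smul_mul_smul_comm, mul_assoc, ← mul_assoc (b ^ n), hbn, smul_mul_assoc,
      mul_smul_comm, smul_smul, pow_succ a, pow_succ b]
    simp only [mul_assoc]
    congr 1
    ring

protected theorem star [StarRing R] [StarRing A] [StarModule R A] (h : QCommute q a b) :
    QCommute (star q) (star b) (star a) := by
  rw [QCommute, ← star_mul, h, star_smul, star_mul]

theorem star_left [StarMul A] (hb : b ∈ unitary A) (h : QCommute q a b) :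
    QCommute q (star b) a := by
  calc star b * a = star b * (a * b) * star b := by
        rw [mul_assoc, mul_assoc, Unitary.mul_star_self_of_mem hb, mul_one]
    _ = q • (a * star b) := by
        rw [h, mul_smul_comm, smul_mul_assoc, ← mul_assoc, Unitary.star_mul_self_of_mem hb,
          one_mul]

theorem star_right [StarMul A] (ha : a ∈ unitary A) (h : QCommute q a b) :
    QCommute q b (star a) := by
  calc b * star a = star a * (a * b) * star a := by
        rw [← mul_assoc, Unitary.star_mul_self_of_mem ha, one_mul]
    _ = q • (star a * b) := by
        rw [h, mul_smul_comm, smul_mul_assoc, mul_assoc, mul_assoc,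
          Unitary.mul_star_self_of_mem ha, mul_one]

end QCommute

end

section QCommutingUnitaries

variable {R A : Type*} [CommRing R] [Ring A] [StarRing A] [Algebra R A] {q : R} {e : ℕ → A}
  {i j : ℕ}

theorem qCommute_self_star_mul_succ (he : ∀ i, e i ∈ unitary A)
    (hq : ∀ i j, i < j → QCommute q (e i) (e j)) (k : ℕ) :
    QCommute q (e k) (star (e k) * e (k + 1)) :=
  ((commute_unitary_self_star (he k)).qCommute.mul_right (hq _ _ (by omega))).congr_scalar
    (one_mul q)

variable [StarRing R]

theorem qCommute_star_left_of_lt (he : ∀ i, e i ∈ unitary A)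
    (hq : ∀ i j, i < j → QCommute q (e i) (e j)) (hqq : star q * q = 1) (hij : i < j) :
    QCommute (star q) (star (e i)) (e j) :=
  ((hq i j hij).star_right (he i)).symm hqq

theorem qCommute_star_right_of_lt (he : ∀ i, e i ∈ unitary A)
    (hq : ∀ i j, i < j → QCommute q (e i) (e j)) (hqq : star q * q = 1) (hij : i < j) :
    QCommute (star q) (e i) (star (e j)) :=
  ((hq i j hij).star_left (he j)).symm hqq

theorem star_mul_succ_mul_self (he : ∀ i, e i ∈ unitary A)
    (hq : ∀ i j, i < j → QCommute q (e i) (e j)) (hqq : star q * q = 1) (k : ℕ) :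
    star (e k) * e (k + 1) * e k = star q • e (k + 1) := by
  rw [mul_assoc, ((hq k (k + 1) (by omega)).symm hqq).eq, mul_smul_comm, ← mul_assoc,
    Unitary.star_mul_self_of_mem (he k), one_mul]

variable [StarModule R A]

theorem qCommute_star_star_of_lt (hq : ∀ i j, i < j → QCommute q (e i) (e j))
    (hqq : star q * q = 1) (hij : i < j) : QCommute q (star (e i)) (star (e j)) :=
  (hq i j hij).star.symm (by rw [mul_comm, hqq])

theorem qCommute_star_mul_succ (he : ∀ i, e i ∈ unitary A)
    (hq : ∀ i j, i < j → QCommute q (e i) (e j)) (hqq : star q * q = 1) (k : ℕ) :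
    QCommute q (star (e k) * e (k + 1)) (star (e (k + 1)) * e (k + 2)) :=
  (((qCommute_star_star_of_lt hq hqq (by omega)).mul_right
      (qCommute_star_left_of_lt he hq hqq (by omega))).mul_left
    ((commute_unitary_self_star (he (k + 1))).qCommute.mul_right (hq _ _ (by omega)))).congr_scalar
    (by linear_combination q * hqq)

theorem commute_star_mul_succ (he : ∀ i, e i ∈ unitary A)
    (hq : ∀ i j, i < j → QCommute q (e i) (e j)) (hqq : star q * q = 1) {k l : ℕ}
    (hkl : k + 1 < l) : Commute (star (e k) * e (k + 1)) (star (e l) * e (l + 1)) :=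
  QCommute.commute ((((qCommute_star_star_of_lt hq hqq (by omega)).mul_right
      (qCommute_star_left_of_lt he hq hqq (by omega))).mul_left
    ((qCommute_star_right_of_lt he hq hqq hkl).mul_right (hq _ _ (by omega)))).congr_scalar
    (by linear_combination (q * star q + 1) * hqq))

end QCommutingUnitaries

theorem ne_zero_of_pow_eq_one {M₀ : Type*} [MonoidWithZero M₀] [Nontrivial M₀] {z : M₀} {n : ℕ}
    (h : z ^ n = 1) (hn : n ≠ 0) : z ≠ 0 := by
  rintro rfl
  simp [zero_pow hn] at h

theorem star_eq_inv_of_pow_eq_one {z : ℂ} {n : ℕ} (h : z ^ n = 1) (hn : n ≠ 0) : star z = z⁻¹ :=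
  (Complex.inv_eq_conj (Complex.norm_eq_one_of_pow_eq_one h hn)).symm

theorem star_mul_self_of_pow_eq_one {z : ℂ} {n : ℕ} (h : z ^ n = 1) (hn : n ≠ 0) :
    star z * z = 1 := by
  rw [star_eq_inv_of_pow_eq_one h hn, inv_mul_cancel₀ (ne_zero_of_pow_eq_one h hn)]

section GaussCoeff

variable {p : ℕ} [NeZero p] {ω : ℂ}

def gaussCoeff (p : ℕ) (ω : ℂ) (x : ZMod p) : ℂ := ω ^ (x.val ^ 2)

theorem pow_val_intCast {z : ℂ} (hz : z ^ p = 1) (n : ℤ) : z ^ (n : ZMod p).val = z ^ n := by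
  have hz0 : z ≠ 0 := ne_zero_of_pow_eq_one hz (NeZero.ne p)
  conv_rhs => rw [← Int.emod_add_mul_ediv n p]
  rw [zpow_add₀ hz0, zpow_mul, zpow_natCast, hz, one_zpow, mul_one, ← ZMod.val_intCast,
    zpow_natCast]

theorem gaussCoeff_intCast (hω : (ω ^ 2) ^ p = 1) (hωp : ω ^ (p ^ 2) = 1) (n : ℤ) :
    gaussCoeff p ω n = ω ^ (n ^ 2) := by
  have hω0 : ω ≠ 0 := ne_zero_of_pow_eq_one hωp (pow_ne_zero 2 (NeZero.ne p))
  have h2p : ω ^ (2 * p : ℤ) = 1 := by rw [← pow_mul] at hω; exact_mod_cast hω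
  have hp2 : ω ^ ((p : ℤ) ^ 2) = 1 := by exact_mod_cast hωp
  set r : ℤ := ((n : ZMod p).val : ℤ)
  have hn : n = r + p * (n / p) := by simp only [r, ZMod.val_intCast, Int.emod_add_mul_ediv]
  calc gaussCoeff p ω n = ω ^ (r ^ 2) := by
        rw [gaussCoeff, ← zpow_natCast]
        push_cast
        rfl
    _ = ω ^ (r ^ 2) * (ω ^ (2 * p : ℤ)) ^ (r * (n / p)) * (ω ^ ((p : ℤ) ^ 2)) ^ ((n / p) ^ 2) := by
        rw [h2p, hp2, one_zpow, one_zpow, mul_one, mul_one]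
    _ = ω ^ (n ^ 2) := by
        rw [← zpow_mul, ← zpow_mul, ← zpow_add₀ hω0, ← zpow_add₀ hω0]
        congr 1
        linear_combination (-(r + p * (n / p) + n)) * hn

theorem gaussCoeff_neg (hω : (ω ^ 2) ^ p = 1) (hωp : ω ^ (p ^ 2) = 1) (x : ZMod p) :
    gaussCoeff p ω (-x) = gaussCoeff p ω x := by
  obtain ⟨n, rfl⟩ := ZMod.intCast_surjective x
  rw [← Int.cast_neg, gaussCoeff_intCast hω hωp, gaussCoeff_intCast hω hωp, neg_sq]

theorem gaussCoeff_add_one (hω : (ω ^ 2) ^ p = 1) (hωp : ω ^ (p ^ 2) = 1) (x : ZMod p) :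
    gaussCoeff p ω (x + 1) = ω * (ω ^ 2) ^ x.val * gaussCoeff p ω x := by
  have hω0 : ω ≠ 0 := ne_zero_of_pow_eq_one hωp (pow_ne_zero 2 (NeZero.ne p))
  obtain ⟨n, rfl⟩ := ZMod.intCast_surjective x
  rw [← Int.cast_one, ← Int.cast_add, gaussCoeff_intCast hω hωp, gaussCoeff_intCast hω hωp,
    pow_val_intCast hω, ← zpow_ofNat, ← zpow_mul, ← zpow_one_add₀ hω0, ← zpow_add₀ hω0]
  congr 1
  ring

theorem star_gaussCoeff_mul_gaussCoeff_add (hω : IsPrimitiveRoot (ω ^ 2) p)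
    (hωp : ω ^ (p ^ 2) = 1) (x m : ZMod p) :
    star (gaussCoeff p ω x) * gaussCoeff p ω (x + m)
      = AddChar.zmodChar p hω.pow_eq_one (x * m) * gaussCoeff p ω m := by
  have hω0 : ω ≠ 0 := ne_zero_of_pow_eq_one hωp (pow_ne_zero 2 (NeZero.ne p))
  obtain ⟨a, rfl⟩ := ZMod.intCast_surjective x
  obtain ⟨b, rfl⟩ := ZMod.intCast_surjective m
  rw [← Int.cast_add, ← Int.cast_mul, AddChar.zmodChar_apply, pow_val_intCast hω.pow_eq_one,
    gaussCoeff_intCast hω.pow_eq_one hωp, gaussCoeff_intCast hω.pow_eq_one hωp,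
    gaussCoeff_intCast hω.pow_eq_one hωp, star_zpow₀,
    star_eq_inv_of_pow_eq_one hωp (pow_ne_zero 2 (NeZero.ne p)), inv_zpow']
  rw [← zpow_ofNat, ← zpow_mul, ← zpow_add₀ hω0, ← zpow_add₀ hω0]
  congr 1
  ring

theorem sum_star_gaussCoeff_mul_gaussCoeff_add (hω : IsPrimitiveRoot (ω ^ 2) p)
    (hωp : ω ^ (p ^ 2) = 1) (m : ZMod p) :
    ∑ x, star (gaussCoeff p ω x) * gaussCoeff p ω (x + m) = if m = 0 then (p : ℂ) else 0 := by
  simp_rw [star_gaussCoeff_mul_gaussCoeff_add hω hωp, ← Finset.sum_mul,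
    AddChar.sum_mulShift m (AddChar.zmodChar_primitive_of_primitive_root p hω)]
  split_ifs with hm
  · simp [hm, gaussCoeff]
  · simp

end GaussCoeff

theorem pow_val_add {M : Type*} [Monoid M] {p : ℕ} [NeZero p] {v : M} (hvp : v ^ p = 1)
    (x y : ZMod p) : v ^ (x + y).val = v ^ x.val * v ^ y.val := by
  rw [ZMod.val_add, ← pow_eq_pow_mod _ hvp, pow_add]

theorem star_pow_val {M : Type*} [Monoid M] [StarMul M] {p : ℕ} [NeZero p] {v : M}
    (hv : v ∈ unitary M) (hvp : v ^ p = 1) (x : ZMod p) : star (v ^ x.val) = v ^ (-x).val := by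
  calc star (v ^ x.val) = star (v ^ x.val) * v ^ (x + -x).val := by simp
    _ = v ^ (-x).val := by
        rw [pow_val_add hvp, ← mul_assoc, Unitary.star_mul_self_of_mem (pow_mem hv _), one_mul]

section GaussSum

variable {p : ℕ} [NeZero p] {ω : ℂ} {A : Type*} [Ring A] [Algebra ℂ A]

def quadGaussSum (p : ℕ) [NeZero p] (ω : ℂ) (v : A) : A :=
  ∑ x : ZMod p, gaussCoeff p ω x • v ^ x.val

theorem Commute.quadGaussSum_left {v w : A} (h : Commute v w) : Commute (quadGaussSum p ω v) w :=
  Commute.sum_left _ _ _ fun _ _ => (h.pow_left _).smul_left _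

variable [StarRing A] {v : A}

theorem quadGaussSum_star (hω : (ω ^ 2) ^ p = 1) (hωp : ω ^ (p ^ 2) = 1) (hv : v ∈ unitary A)
    (hvp : v ^ p = 1) : quadGaussSum p ω (star v) = quadGaussSum p ω v := by
  rw [quadGaussSum, quadGaussSum, ← Equiv.sum_comp (Equiv.neg (ZMod p))]
  simp only [Equiv.neg_apply, ← star_pow, star_pow_val hv hvp, neg_neg, gaussCoeff_neg hω hωp]

theorem mul_quadGaussSum (hω : (ω ^ 2) ^ p = 1) (hωp : ω ^ (p ^ 2) = 1) (hv : v ∈ unitary A)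
    (hvp : v ^ p = 1) {f : A} (hf : QCommute (ω ^ 2) f v) :
    ω • (f * quadGaussSum p ω v) = quadGaussSum p ω v * star v * f := by
  have hv1 : v ^ (1 : ZMod p).val = v := by
    rw [ZMod.val_one_eq_one_mod, ← pow_eq_pow_mod _ hvp, pow_one]
  calc ω • (f * quadGaussSum p ω v)
      = ∑ x : ZMod p, gaussCoeff p ω (x + 1) • (v ^ x.val * f) := by
        simp only [quadGaussSum, Finset.mul_sum, Finset.smul_sum, mul_smul_comm,
          (hf.pow_right _).eq, smul_smul, gaussCoeff_add_one hω hωp]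
        refine Finset.sum_congr rfl fun x _ => ?_
        congr 1
        ring
    _ = ∑ x : ZMod p, gaussCoeff p ω (x + 1) • (v ^ (x + 1).val * star v * f) := by
        simp only [pow_val_add hvp, hv1, mul_assoc, Unitary.mul_star_self_of_mem hv, one_mul]
    _ = quadGaussSum p ω v * star v * f := by
        rw [quadGaussSum, Finset.sum_mul, Finset.sum_mul]
        simp only [smul_mul_assoc]
        exact Equiv.sum_comp (Equiv.addRight 1) fun m => gaussCoeff p ω m • (v ^ m.val * star v * f)

variable [StarModule ℂ A]

theorem star_quadGaussSum (hv : v ∈ unitary A) (hvp : v ^ p = 1) :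
    star (quadGaussSum p ω v) = ∑ x : ZMod p, star (gaussCoeff p ω x) • v ^ (-x).val := by
  simp only [quadGaussSum, star_sum, star_smul, star_pow_val hv hvp]

theorem star_quadGaussSum_mul_self (hω : IsPrimitiveRoot (ω ^ 2) p) (hωp : ω ^ (p ^ 2) = 1)
    (hv : v ∈ unitary A) (hvp : v ^ p = 1) :
    star (quadGaussSum p ω v) * quadGaussSum p ω v = (p : ℂ) • 1 := by
  calc star (quadGaussSum p ω v) * quadGaussSum p ω v
      = ∑ x : ZMod p, ∑ y : ZMod p,
          (star (gaussCoeff p ω x) * gaussCoeff p ω y) • v ^ (-x + y).val := by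
        rw [star_quadGaussSum hv hvp, quadGaussSum, Finset.sum_mul_sum]
        simp only [smul_mul_smul_comm, pow_val_add hvp]
    _ = ∑ x : ZMod p, ∑ m : ZMod p,
          (star (gaussCoeff p ω x) * gaussCoeff p ω (x + m)) • v ^ m.val := by
        refine Finset.sum_congr rfl fun x _ => ?_
        rw [← Equiv.sum_comp (Equiv.addLeft x)]
        simp only [Equiv.coe_addLeft, neg_add_cancel_left]
    _ = ∑ m : ZMod p, (if m = 0 then (p : ℂ) else 0) • v ^ m.val := by
        rw [Finset.sum_comm]
        simp only [← Finset.sum_smul, sum_star_gaussCoeff_mul_gaussCoeff_add hω hωp]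
    _ = (p : ℂ) • 1 := by simp

theorem quadGaussSum_mul_star_self (hω : IsPrimitiveRoot (ω ^ 2) p) (hωp : ω ^ (p ^ 2) = 1)
    (hv : v ∈ unitary A) (hvp : v ^ p = 1) :
    quadGaussSum p ω v * star (quadGaussSum p ω v) = (p : ℂ) • 1 := by
  have hcomm : Commute (quadGaussSum p ω v) (star (quadGaussSum p ω v)) := by
    rw [star_quadGaussSum hv hvp]
    exact Commute.sum_right _ _ _ fun _ _ =>
      (((Commute.refl v).quadGaussSum_left).pow_right _).smul_right _
  rw [hcomm.eq, star_quadGaussSum_mul_self hω hωp hv hvp]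

theorem quadGaussSum_mul_mul_star (hω : IsPrimitiveRoot (ω ^ 2) p) (hωp : ω ^ (p ^ 2) = 1)
    (hv : v ∈ unitary A) (hvp : v ^ p = 1) {f : A} (hf : QCommute (ω ^ 2) f v) :
    quadGaussSum p ω v * f * star (quadGaussSum p ω v) = ((p : ℂ) * ω) • (v * f) := by
  set S := quadGaussSum p ω v
  have hSv : Commute S v := (Commute.refl v).quadGaussSum_left
  calc S * f * star S = v * (S * star v * f) * star S := by
        rw [← mul_assoc, ← mul_assoc, ← hSv.eq, mul_assoc S v, Unitary.mul_star_self_of_mem hv,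
          mul_one]
    _ = v * (ω • (f * S)) * star S := by rw [mul_quadGaussSum hω.pow_eq_one hωp hv hvp hf]
    _ = ω • (v * f * (S * star S)) := by simp only [mul_smul_comm, smul_mul_assoc, mul_assoc]
    _ = ((p : ℂ) * ω) • (v * f) := by
        rw [quadGaussSum_mul_star_self hω hωp hv hvp, mul_smul_comm, mul_one, smul_smul, mul_comm]

end GaussSum

theorem star_inv_sqrt_mul_inv_sqrt_mul_natCast (p : ℕ) [NeZero p] :
    star ((Real.sqrt p : ℂ))⁻¹ * (Real.sqrt p : ℂ)⁻¹ * p = 1 := by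
  have hsq : (Real.sqrt p : ℂ) * Real.sqrt p = p := by
    rw [← Complex.ofReal_mul, Real.mul_self_sqrt (Nat.cast_nonneg p)]
    simp
  rw [star_inv₀, Complex.star_def, Complex.conj_ofReal, ← mul_inv, hsq,
    inv_mul_cancel₀ (Nat.cast_ne_zero.mpr (NeZero.ne p))]

section GaussUnitary

variable {p : ℕ} [NeZero p] {ω : ℂ} {A : Type*} [Ring A] [Algebra ℂ A]

noncomputable def gaussUnitary (p : ℕ) [NeZero p] (ω : ℂ) (v : A) : A :=
  ((Real.sqrt p : ℂ))⁻¹ • quadGaussSum p ω v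

theorem Commute.gaussUnitary_left {v w : A} (h : Commute v w) : Commute (gaussUnitary p ω v) w :=
  h.quadGaussSum_left.smul_left _

theorem map_gaussUnitary {B F : Type*} [Ring B] [Algebra ℂ B] [FunLike F A B]
    [AlgHomClass F ℂ A B] (φ : F) (v : A) : φ (gaussUnitary p ω v) = gaussUnitary p ω (φ v) := by
  simp only [gaussUnitary, quadGaussSum, map_smul, map_sum, map_pow]

variable [StarRing A] {v : A}

theorem gaussUnitary_star (hω : (ω ^ 2) ^ p = 1) (hωp : ω ^ (p ^ 2) = 1) (hv : v ∈ unitary A)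
    (hvp : v ^ p = 1) : gaussUnitary p ω (star v) = gaussUnitary p ω v := by
  rw [gaussUnitary, gaussUnitary, quadGaussSum_star hω hωp hv hvp]

variable [StarModule ℂ A]

theorem gaussUnitary_mem_unitary (hω : IsPrimitiveRoot (ω ^ 2) p) (hωp : ω ^ (p ^ 2) = 1)
    (hv : v ∈ unitary A) (hvp : v ^ p = 1) : gaussUnitary p ω v ∈ unitary A := by
  have hc := star_inv_sqrt_mul_inv_sqrt_mul_natCast p
  rw [Unitary.mem_iff, gaussUnitary, star_smul, smul_mul_smul_comm, smul_mul_smul_comm,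
    star_quadGaussSum_mul_self hω hωp hv hvp, quadGaussSum_mul_star_self hω hωp hv hvp, smul_smul,
    smul_smul, mul_comm _ (star _), hc]
  simp

theorem gaussUnitary_mul_mul_star (hω : IsPrimitiveRoot (ω ^ 2) p) (hωp : ω ^ (p ^ 2) = 1)
    (hv : v ∈ unitary A) (hvp : v ^ p = 1) {f : A} (hf : QCommute (ω ^ 2) f v) :
    gaussUnitary p ω v * f * star (gaussUnitary p ω v) = ω • (v * f) := by
  have hc := star_inv_sqrt_mul_inv_sqrt_mul_natCast p
  rw [gaussUnitary, star_smul, smul_mul_assoc, smul_mul_smul_comm,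
    quadGaussSum_mul_mul_star hω hωp hv hvp hf, smul_smul]
  congr 1
  linear_combination ω * hc

theorem star_gaussUnitary_mul_mul (hω : IsPrimitiveRoot (ω ^ 2) p) (hωp : ω ^ (p ^ 2) = 1)
    {w : A} (hw : w ∈ unitary A) (hwp : w ^ p = 1) (hvw : QCommute (ω ^ 2) v w) :
    star (gaussUnitary p ω w) * v * gaussUnitary p ω w = star ω • (star w * v) := by
  have hωu := star_mul_self_of_pow_eq_one hωp (pow_ne_zero 2 (NeZero.ne p))
  have hUw := gaussUnitary_mem_unitary hω hωp hw hwp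
  have h := gaussUnitary_mul_mul_star hω hωp hw hwp (f := star w * v)
    (((commute_unitary_star_self hw).qCommute.mul_left hvw).congr_scalar (one_mul _))
  rw [← mul_assoc w (star w) v, Unitary.mul_star_self_of_mem hw, one_mul] at h
  calc star (gaussUnitary p ω w) * v * gaussUnitary p ω w
      = star (gaussUnitary p ω w) * (star ω • (ω • v)) * gaussUnitary p ω w := by
        rw [smul_smul, hωu, one_smul]
    _ = star ω • (star (gaussUnitary p ω w) * gaussUnitary p ω w * (star w * v)
          * (star (gaussUnitary p ω w) * gaussUnitary p ω w)) := by
        rw [← h]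
        simp only [mul_smul_comm, smul_mul_assoc, mul_assoc]
    _ = star ω • (star w * v) := by rw [Unitary.star_mul_self_of_mem hUw, one_mul, mul_one]

/-- Conjugation by `u(w)⋆` sends `v` to `ω̄ w⋆ v`, conjugation by `u(v)` sends `w` to `ω v⋆ w`,
the adjoint of the former; as conjugations commute with `u(·)` and `u(x⋆) = u(x)`, this gives
`u(w)⋆ u(v) u(w) = u(v) u(w) u(v)⋆`. -/
theorem gaussUnitary_braid (hω : IsPrimitiveRoot (ω ^ 2) p) (hωp : ω ^ (p ^ 2) = 1) {w : A}
    (hv : v ∈ unitary A) (hw : w ∈ unitary A) (hvp : v ^ p = 1) (hwp : w ^ p = 1)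
    (hvw : QCommute (ω ^ 2) v w) :
    gaussUnitary p ω v * gaussUnitary p ω w * gaussUnitary p ω v
      = gaussUnitary p ω w * gaussUnitary p ω v * gaussUnitary p ω w := by
  have hUv := gaussUnitary_mem_unitary hω hωp hv hvp
  have hUw := gaussUnitary_mem_unitary hω hωp hw hwp
  set φ := Unitary.conjStarAlgAut ℂ A (star ⟨_, hUw⟩)
  set ψ := Unitary.conjStarAlgAut ℂ A ⟨_, hUv⟩
  have hφ (x : A) : φ x = star (gaussUnitary p ω w) * x * gaussUnitary p ω w :=
    Unitary.conjStarAlgAut_star_apply _ x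
  have hψ (x : A) : ψ x = gaussUnitary p ω v * x * star (gaussUnitary p ω v) := rfl
  have hψw : ψ w = ω • (star v * w) := by
    rw [hψ, ← gaussUnitary_star hω.pow_eq_one hωp hv hvp]
    exact gaussUnitary_mul_mul_star hω hωp (Unitary.star_mem hv)
      (by rw [← star_pow, hvp, star_one]) (hvw.star_right hv)
  have hconj : φ (gaussUnitary p ω v) = ψ (gaussUnitary p ω w) := by
    rw [map_gaussUnitary, map_gaussUnitary, hψw, ← gaussUnitary_star hω.pow_eq_one hωp
      (Unitary.map_mem φ hv) (by rw [← map_pow, hvp, map_one]), hφ,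
      star_gaussUnitary_mul_mul hω hωp hw hwp hvw, star_smul, star_mul, star_star, star_star]
  rw [hφ, hψ] at hconj
  calc gaussUnitary p ω v * gaussUnitary p ω w * gaussUnitary p ω v
      = gaussUnitary p ω w * (star (gaussUnitary p ω w) * gaussUnitary p ω v * gaussUnitary p ω w)
          * gaussUnitary p ω v := by
        simp only [← mul_assoc, Unitary.mul_star_self_of_mem hUw, one_mul]
    _ = gaussUnitary p ω w * gaussUnitary p ω v * gaussUnitary p ω w := by
        rw [hconj]
        simp only [mul_assoc, Unitary.star_mul_self_of_mem hUv, mul_one]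

end GaussUnitary

theorem isPrimitiveRoot_omegaP_sq {p : ℕ} (hp : p ≠ 0) : IsPrimitiveRoot (omegaP p ^ 2) p := by
  by_cases hodd : Odd p
  · rw [omegaP, if_pos hodd]
    exact (Complex.isPrimitiveRoot_exp p hp).pow_of_coprime 2
      (Nat.prime_two.coprime_iff_not_dvd.mpr hodd.not_two_dvd_nat)
  · rw [omegaP, if_neg hodd, ← Complex.exp_nat_mul]
    convert Complex.isPrimitiveRoot_exp p hp using 2
    push_cast
    ring

theorem omegaP_pow_sq {p : ℕ} (hp : p ≠ 0) : omegaP p ^ (p ^ 2) = 1 := by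
  by_cases hodd : Odd p
  · have hω : omegaP p ^ p = 1 := by
      rw [omegaP, if_pos hodd]
      exact (Complex.isPrimitiveRoot_exp p hp).pow_eq_one
    rw [sq, pow_mul, hω, one_pow]
  · obtain ⟨m, rfl⟩ := Nat.not_odd_iff_even.mp hodd
    rw [show (m + m) ^ 2 = 2 * (m + m) * m by ring, pow_mul, pow_mul,
      (isPrimitiveRoot_omegaP_sq hp).pow_eq_one, one_pow]

theorem star_omegaP_mul_self {p : ℕ} (hp : p ≠ 0) : star (omegaP p) * omegaP p = 1 :=
  star_mul_self_of_pow_eq_one (omegaP_pow_sq hp) (pow_ne_zero 2 hp)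

theorem star_omegaP_sq_mul_self {p : ℕ} (hp : p ≠ 0) : star (omegaP p ^ 2) * omegaP p ^ 2 = 1 := by
  rw [star_pow, ← mul_pow, star_omegaP_mul_self hp, one_pow]

section Generators

variable {p : ℕ} {A : Type*} [Ring A] [Algebra ℂ A] [StarRing A] {e : ℕ → A} {i j : ℕ}

theorem vGen_succ (k : ℕ) : vGen p e (k + 1) = omegaP p • (star (e k) * e (k + 1)) := rfl

variable [NeZero p]

theorem uGen_eq_gaussUnitary (i : ℕ) : uGen p e i = gaussUnitary p (omegaP p) (vGen p e i) := by
  obtain ⟨n, rfl⟩ : ∃ n, p = n + 1 := Nat.exists_eq_succ_of_ne_zero (NeZero.ne p)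
  rw [uGen, gaussUnitary, quadGaussSum]
  congr 1
  exact (Fin.sum_univ_eq_sum_range (fun k => omegaP (n + 1) ^ (k ^ 2) • vGen (n + 1) e i ^ k)
    _).symm

theorem vGen_pow_eq_one (he : ∀ i, e i ∈ unitary A) (he_pow : ∀ i, e i ^ p = 1)
    (hq : ∀ i j, i < j → QCommute (omegaP p ^ 2) (e i) (e j)) (hi : 1 ≤ i) :
    vGen p e i ^ p = 1 := by
  obtain ⟨k, rfl⟩ := Nat.exists_eq_add_of_le' hi
  rw [vGen_succ, ((hq k (k + 1) (by omega)).star_right (he k)).smul_mul_pow, ← star_pow, he_pow,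
    he_pow, star_one, mul_one, omegaP_pow_sq (NeZero.ne p), one_smul]

variable [StarModule ℂ A]

theorem vGen_mem_unitary (he : ∀ i, e i ∈ unitary A) (hi : 1 ≤ i) : vGen p e i ∈ unitary A := by
  obtain ⟨k, rfl⟩ := Nat.exists_eq_add_of_le' hi
  exact Unitary.smul_mem_of_mem (Unitary.mem_iff_star_mul_self.mpr
    (star_omegaP_mul_self (NeZero.ne p))) (mul_mem (Unitary.star_mem (he k)) (he (k + 1)))

theorem qCommute_vGen_succ (he : ∀ i, e i ∈ unitary A)
    (hq : ∀ i j, i < j → QCommute (omegaP p ^ 2) (e i) (e j)) (hi : 1 ≤ i) :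
    QCommute (omegaP p ^ 2) (vGen p e i) (vGen p e (i + 1)) := by
  obtain ⟨k, rfl⟩ := Nat.exists_eq_add_of_le' hi
  exact ((qCommute_star_mul_succ he hq (star_omegaP_sq_mul_self (NeZero.ne p)) k).smul_left
    _).smul_right _

theorem commute_vGen (he : ∀ i, e i ∈ unitary A)
    (hq : ∀ i j, i < j → QCommute (omegaP p ^ 2) (e i) (e j)) (hi : 1 ≤ i) (hij : i + 1 < j) :
    Commute (vGen p e i) (vGen p e j) := by
  obtain ⟨k, rfl⟩ := Nat.exists_eq_add_of_le' hi
  obtain ⟨l, rfl⟩ : ∃ l, j = l + 1 := ⟨j - 1, by omega⟩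
  exact ((commute_star_mul_succ he hq (star_omegaP_sq_mul_self (NeZero.ne p))
    (by omega : k + 1 < l)).smul_left _).smul_right _

theorem uGen_mem_unitary (he : ∀ i, e i ∈ unitary A) (he_pow : ∀ i, e i ^ p = 1)
    (hq : ∀ i j, i < j → QCommute (omegaP p ^ 2) (e i) (e j)) (hi : 1 ≤ i) :
    uGen p e i ∈ unitary A := by
  rw [uGen_eq_gaussUnitary]
  exact gaussUnitary_mem_unitary (isPrimitiveRoot_omegaP_sq (NeZero.ne p))
    (omegaP_pow_sq (NeZero.ne p)) (vGen_mem_unitary he hi) (vGen_pow_eq_one he he_pow hq hi)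

theorem uGen_braid (he : ∀ i, e i ∈ unitary A) (he_pow : ∀ i, e i ^ p = 1)
    (hq : ∀ i j, i < j → QCommute (omegaP p ^ 2) (e i) (e j)) (hi : 1 ≤ i) :
    uGen p e i * uGen p e (i + 1) * uGen p e i
      = uGen p e (i + 1) * uGen p e i * uGen p e (i + 1) := by
  simp only [uGen_eq_gaussUnitary]
  exact gaussUnitary_braid (isPrimitiveRoot_omegaP_sq (NeZero.ne p)) (omegaP_pow_sq (NeZero.ne p))
    (vGen_mem_unitary he hi) (vGen_mem_unitary he (by omega)) (vGen_pow_eq_one he he_pow hq hi)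
    (vGen_pow_eq_one he he_pow hq (by omega)) (qCommute_vGen_succ he hq hi)

theorem commute_uGen (he : ∀ i, e i ∈ unitary A)
    (hq : ∀ i j, i < j → QCommute (omegaP p ^ 2) (e i) (e j)) (hi : 1 ≤ i) (hij : i + 1 < j) :
    Commute (uGen p e i) (uGen p e j) := by
  simp only [uGen_eq_gaussUnitary]
  exact (commute_vGen he hq hi hij).gaussUnitary_left.symm.gaussUnitary_left.symm

theorem uGen_succ_mul_mul_star (he : ∀ i, e i ∈ unitary A) (he_pow : ∀ i, e i ^ p = 1)
    (hq : ∀ i j, i < j → QCommute (omegaP p ^ 2) (e i) (e j)) (k : ℕ) :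
    uGen p e (k + 1) * e k * star (uGen p e (k + 1)) = e (k + 1) := by
  have hω := star_omegaP_mul_self (NeZero.ne p)
  rw [uGen_eq_gaussUnitary, gaussUnitary_mul_mul_star (isPrimitiveRoot_omegaP_sq (NeZero.ne p))
    (omegaP_pow_sq (NeZero.ne p)) (vGen_mem_unitary he le_add_self)
    (vGen_pow_eq_one he he_pow hq le_add_self) ((qCommute_self_star_mul_succ he hq k).smul_right _),
    vGen_succ, smul_mul_assoc, star_mul_succ_mul_self he hq (star_omegaP_sq_mul_self (NeZero.ne p)),
    smul_smul, smul_smul, star_pow]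
  convert one_smul ℂ (e (k + 1))
  linear_combination (1 + omegaP p * star (omegaP p)) * hω

end Generators

/-- **Gaussian representations.** Let `p ≥ 2`, `ω = exp(2πi/p)` for odd `p` and
`ω = exp(πi/p)` for even `p`, and let `(e_i)_{i ≥ 0}` be unitaries in a unital complex
`*`-algebra `A` with `e_i^p = 1` and `e_i e_j = ω² e_j e_i` for `i < j`. With
`v_i = ω e_{i−1}* e_i` and `u_i = p^{−1/2} ∑_{k=0}^{p−1} ω^{k²} v_i^k` one has:
(a) `v_i^p = 1`, `v_i v_{i+1} = ω² v_{i+1} v_i` and `v_i v_j = v_j v_i` for `|i−j| > 1`;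
(b) each `u_i` is unitary; (c) the `u_i` satisfy the braid relations; and
(d) `u_{i+1} e_i u_{i+1}* = e_{i+1}` for all `i ≥ 0`. -/
theorem gaussian_representation (p : ℕ) (hp : 2 ≤ p)
    {A : Type*} [Ring A] [Algebra ℂ A] [StarRing A] [StarModule ℂ A]
    (e : ℕ → A)
    (he_unitary : ∀ i, star (e i) * e i = 1 ∧ e i * star (e i) = 1)
    (he_pow : ∀ i, e i ^ p = 1)
    (he_comm : ∀ i j, i < j → e i * e j = (omegaP p) ^ 2 • (e j * e i)) :
    (∀ i, 1 ≤ i → (vGen p e i) ^ p = 1) ∧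
    (∀ i, 1 ≤ i → vGen p e i * vGen p e (i + 1)
      = (omegaP p) ^ 2 • (vGen p e (i + 1) * vGen p e i)) ∧
    (∀ i j, 1 ≤ i → 1 ≤ j → (i + 1 < j ∨ j + 1 < i) →
      vGen p e i * vGen p e j = vGen p e j * vGen p e i) ∧
    (∀ i, 1 ≤ i → star (uGen p e i) * uGen p e i = 1 ∧ uGen p e i * star (uGen p e i) = 1) ∧
    (∀ i, 1 ≤ i → uGen p e i * uGen p e (i + 1) * uGen p e i
      = uGen p e (i + 1) * uGen p e i * uGen p e (i + 1)) ∧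
    (∀ i j, 1 ≤ i → 1 ≤ j → (i + 1 < j ∨ j + 1 < i) →
      uGen p e i * uGen p e j = uGen p e j * uGen p e i) ∧
    (∀ i : ℕ, uGen p e (i + 1) * e i * star (uGen p e (i + 1)) = e (i + 1)) := by
  have : NeZero p := ⟨by omega⟩
  have he (i : ℕ) : e i ∈ unitary A := Unitary.mem_iff.mpr (he_unitary i)
  refine ⟨fun i hi => vGen_pow_eq_one he he_pow he_comm hi,
    fun i hi => qCommute_vGen_succ he he_comm hi, fun i j hi hj hij => ?_,
    fun i hi => Unitary.mem_iff.mp (uGen_mem_unitary he he_pow he_comm hi),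
    fun i hi => uGen_braid he he_pow he_comm hi, fun i j hi hj hij => ?_,
    uGen_succ_mul_mul_star he he_pow he_comm⟩
  · rcases hij with hij | hij
    · exact (commute_vGen he he_comm hi hij).eq
    · exact (commute_vGen he he_comm hj hij).eq.symm
  · rcases hij with hij | hij
    · exact (commute_uGen he he_comm hi hij).eq
    · exact (commute_uGen he he_comm hj hij).eq.symm
end
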